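/- arXiv:2303.11264 — 2 statements merged into one kernel-verified Lean document; each statement's English description precedes it below -/
import Mathlib

section
/- The matrix Z_h := (I - Z_{AB}†·Z_{AB})_{Nx+1:,:} (i.e., I - Z_{AB}†Z_{AB} with its first Nx rows removed) has rank NuT. -/
/-!
Since `Z_{AB} Z† Z_{AB} = Z_{AB}`, the column space of `I - Z† Z_{AB}` is `ker Z_{AB}`.
The product `Z·Â` is strictly block lower triangular, hence nilpotent, so `I - Z·Â` is
invertible and `Z_{AB}` is surjective; by rank–nullity its kernel has dimension `NuT`.
The first block row of `Z_{AB}` is `[I, 0, …]`, so every kernel vector vanishes on the first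
`Nx` coordinates, and deleting these coordinates is injective on the column space.
-/

open Matrix

/-- Moore–Penrose pseudoinverse conditions. -/
def IsMoorePenrose {m n : Type*} [Fintype m] [Fintype n]
    (M : Matrix m n ℝ) (Mp : Matrix n m ℝ) : Prop :=
  M * Mp * M = M ∧ Mp * M * Mp = Mp ∧ (M * Mp)ᵀ = M * Mp ∧ (Mp * M)ᵀ = Mp * M

/-- Block-downshift matrix: identity `Nx × Nx` blocks on the first block subdiagonal. -/
def dshift (Nx T : ℕ) : Matrix (Fin (T+1) × Fin Nx) (Fin (T+1) × Fin Nx) ℝ :=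
  Matrix.of fun p q => if p.1.val = q.1.val + 1 ∧ p.2 = q.2 then 1 else 0

/-- Block diagonal `Â = blkdiag(A, …, A)` with `T+1` copies. -/
def Ahat {Nx : ℕ} (A : Matrix (Fin Nx) (Fin Nx) ℝ) (T : ℕ) :
    Matrix (Fin (T+1) × Fin Nx) (Fin (T+1) × Fin Nx) ℝ :=
  Matrix.of fun p q => if p.1 = q.1 then A p.2 q.2 else 0

/-- Block diagonal `B̂ = blkdiag(B, …, B)` with `T` copies, embedded so that `Z * B̂`
has the right dimensions `Nx(T+1) × NuT`. -/
def Bhat {Nx Nu : ℕ} (B : Matrix (Fin Nx) (Fin Nu) ℝ) (T : ℕ) :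
    Matrix (Fin (T+1) × Fin Nx) (Fin T × Fin Nu) ℝ :=
  Matrix.of fun p q => if p.1.val = q.1.val then B p.2 q.2 else 0

/-- `Z_{AB} := [I - Z·Â, -Z·B̂]`. -/
def ZAB {Nx Nu : ℕ} (A : Matrix (Fin Nx) (Fin Nx) ℝ) (B : Matrix (Fin Nx) (Fin Nu) ℝ)
    (T : ℕ) : Matrix (Fin (T+1) × Fin Nx) ((Fin (T+1) × Fin Nx) ⊕ (Fin T × Fin Nu)) ℝ :=
  Matrix.fromCols (1 - dshift Nx T * Ahat A T) (-(dshift Nx T * Bhat B T))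

/-- The right-hand side `[I; 0]`: identity in the first `Nx` rows (block `t = 0`),
zeros below. -/
def rhsIO (Nx T : ℕ) : Matrix (Fin (T+1) × Fin Nx) (Fin Nx) ℝ :=
  Matrix.of fun p j => if p.1 = 0 ∧ p.2 = j then 1 else 0

/-- Remove the first `Nx` rows (the block `t = 0` of the state part) of a matrix whose
rows are indexed like the rows of `Φ`; state block `t` of the result corresponds to
block `t+1` of the input. -/
def tail2 {Nx Nu T : ℕ} {c : Type*}
    (M : Matrix ((Fin (T+1) × Fin Nx) ⊕ (Fin T × Fin Nu)) c ℝ) :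
    Matrix ((Fin T × Fin Nx) ⊕ (Fin T × Fin Nu)) c ℝ :=
  Matrix.of fun p j =>
    match p with
    | Sum.inl (t, i) => M (Sum.inl (t.succ, i)) j
    | Sum.inr q => M (Sum.inr q) j

/-- Trajectory set `𝒴(x0)`: trajectories `y = Φ_{Nx+1:,:} x0` over all `Φ` satisfying
the achievability constraint `Z_{AB} Φ = [I;0]`. -/
def trajSet {Nx Nu : ℕ} (A : Matrix (Fin Nx) (Fin Nx) ℝ)
    (B : Matrix (Fin Nx) (Fin Nu) ℝ) (T : ℕ) (x0 : Fin Nx → ℝ) :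
    Set ((Fin T × Fin Nx) ⊕ (Fin T × Fin Nu) → ℝ) :=
  {y | ∃ Φ : Matrix ((Fin (T+1) × Fin Nx) ⊕ (Fin T × Fin Nu)) (Fin Nx) ℝ,
        ZAB A B T * Φ = rhsIO Nx T ∧ y = tail2 Φ *ᵥ x0}

namespace Matrix

variable {m m' n R : Type*} [Fintype n]

theorem range_mulVecLin_one_sub_mul_eq_ker [CommRing R] [DecidableEq n] [Fintype m]
    {M : Matrix m n R} {Mp : Matrix n m R} (h : M * Mp * M = M) :
    LinearMap.range (1 - Mp * M).mulVecLin = LinearMap.ker M.mulVecLin := by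
  apply le_antisymm
  · rintro _ ⟨x, rfl⟩
    rw [LinearMap.mem_ker, mulVecLin_apply, mulVecLin_apply, mulVec_mulVec, Matrix.mul_sub,
      Matrix.mul_one, ← Matrix.mul_assoc, h, sub_self, zero_mulVec]
  · intro v hv
    rw [LinearMap.mem_ker, mulVecLin_apply] at hv
    exact ⟨v, by rw [mulVecLin_apply, sub_mulVec, one_mulVec, ← mulVec_mulVec, hv, mulVec_zero,
      sub_zero]⟩

theorem rank_submatrix_id_eq_of_mulVec_apply_eq_zero [Field R] {N : Matrix m n R} {g : m' → m}
    (h : ∀ x, ∀ i ∉ Set.range g, (N *ᵥ x) i = 0) :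
    (N.submatrix g id).rank = N.rank := by
  let restrict := LinearMap.funLeft R R g ∘ₗ (LinearMap.range N.mulVecLin).subtype
  have h_inj : Function.Injective restrict := by
    rw [← LinearMap.ker_eq_bot, Submodule.eq_bot_iff]
    rintro ⟨_, x, rfl⟩ hx
    ext i
    by_cases hi : i ∈ Set.range g
    · obtain ⟨i', rfl⟩ := hi
      exact congrFun (LinearMap.mem_ker.mp hx) i'
    · exact h x i hi
  rw [rank, rank, ← LinearMap.finrank_range_of_inj h_inj, LinearMap.range_comp,
    Submodule.range_subtype, ← LinearMap.range_comp]
  rfl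

theorem finrank_ker_mulVecLin_add_card [Field R] [Fintype m] {M : Matrix m n R}
    (hM : Function.Surjective M.mulVecLin) :
    Module.finrank R (LinearMap.ker M.mulVecLin) + Fintype.card m = Fintype.card n := by
  have := M.mulVecLin.finrank_range_add_finrank_ker
  rw [LinearMap.range_eq_top.mpr hM, finrank_top, Module.finrank_fintype_fun_eq_card,
    Module.finrank_fintype_fun_eq_card] at this
  omega

theorem pow_apply_eq_zero_of_lt_add [DecidableEq n] [Semiring R] {X : Matrix n n R} (level : n → ℕ)
    (hX : ∀ p q, level p ≤ level q → X p q = 0) (k : ℕ) (p q : n)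
    (hpq : level p < level q + k) : (X ^ k) p q = 0 := by
  induction k generalizing p with
  | zero => exact one_apply_ne fun h => by subst h; omega
  | succ k ih =>
    rw [pow_succ', mul_apply]
    refine Finset.sum_eq_zero fun r _ => ?_
    by_cases hpr : level p ≤ level r
    · rw [hX p r hpr, zero_mul]
    · rw [ih r (by omega), mul_zero]

theorem isNilpotent_of_apply_eq_zero_of_le [DecidableEq n] [Semiring R] {X : Matrix n n R} (level : n → ℕ)
    (hX : ∀ p q, level p ≤ level q → X p q = 0) : IsNilpotent X := by
  refine ⟨Finset.univ.sup level + 1, ?_⟩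
  ext p q
  exact pow_apply_eq_zero_of_lt_add level hX _ p q
    (Nat.lt_succ_of_le ((Finset.le_sup (Finset.mem_univ p)).trans (Nat.le_add_left _ _)))

end Matrix

section ZAB

variable {Nx Nu T : ℕ} (A : Matrix (Fin Nx) (Fin Nx) ℝ) (B : Matrix (Fin Nx) (Fin Nu) ℝ)

theorem dshift_mulVec_apply_zero (w : Fin (T+1) × Fin Nx → ℝ) (i : Fin Nx) :
    (dshift Nx T *ᵥ w) (0, i) = 0 :=
  Finset.sum_eq_zero fun _ _ => by simp [dshift]

theorem dshift_mul_Ahat_apply_of_le {p q : Fin (T+1) × Fin Nx} (hpq : p.1 ≤ q.1) :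
    (dshift Nx T * Ahat A T) p q = 0 := by
  refine Finset.sum_eq_zero fun s _ => ?_
  simp only [dshift, Ahat, of_apply]
  split_ifs with hps hsq
  · rw [← hsq, Fin.le_def] at hpq; omega
  all_goals simp

theorem isUnit_one_sub_dshift_mul_Ahat : IsUnit (1 - dshift Nx T * Ahat A T) :=
  (isNilpotent_of_apply_eq_zero_of_le (fun p => p.1.val)
    fun _ _ hpq => dshift_mul_Ahat_apply_of_le A hpq).isUnit_one_sub

theorem ZAB_mulVec_apply_zero (v : (Fin (T+1) × Fin Nx) ⊕ (Fin T × Fin Nu) → ℝ)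
    (i : Fin Nx) :
    (ZAB A B T *ᵥ v) (0, i) = v (Sum.inl (0, i)) := by
  simp [ZAB, sub_mulVec, neg_mulVec, ← mulVec_mulVec, dshift_mulVec_apply_zero]

theorem ZAB_mulVecLin_surjective : Function.Surjective (ZAB A B T).mulVecLin := by
  obtain ⟨W, hW⟩ := (isUnit_one_sub_dshift_mul_Ahat (T := T) A).exists_right_inv
  intro y
  refine ⟨Sum.elim (W *ᵥ y) 0, ?_⟩
  rw [mulVecLin_apply, ZAB, fromCols_mulVec_sumElim, mulVec_mulVec, hW, one_mulVec, mulVec_zero,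
    add_zero]

theorem finrank_ker_ZAB :
    Module.finrank ℝ (LinearMap.ker (ZAB A B T).mulVecLin) = Nu * T := by
  have := Matrix.finrank_ker_mulVecLin_add_card (ZAB_mulVecLin_surjective (T := T) A B)
  simp only [Fintype.card_sum, Fintype.card_prod, Fintype.card_fin] at this
  rw [Nat.mul_comm]
  omega

theorem tail2_eq_submatrix {c : Type*}
    (M : Matrix ((Fin (T+1) × Fin Nx) ⊕ (Fin T × Fin Nu)) c ℝ) :
    tail2 M = M.submatrix (Sum.map (Prod.map Fin.succ id) id) id := by
  ext (⟨t, i⟩ | q) j <;> rfl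

end ZAB

/-- `Z_h := (I - Z_{AB}†Z_{AB})_{Nx+1:,:}` has rank `NuT`. -/
theorem Zh_rank {Nx Nu T : ℕ}
    (A : Matrix (Fin Nx) (Fin Nx) ℝ) (B : Matrix (Fin Nx) (Fin Nu) ℝ)
    (Zdag : Matrix ((Fin (T+1) × Fin Nx) ⊕ (Fin T × Fin Nu)) (Fin (T+1) × Fin Nx) ℝ)
    (hMP : IsMoorePenrose (ZAB A B T) Zdag) :
    (tail2 (1 - Zdag * ZAB A B T)).rank = Nu * T := by
  have h_range := Matrix.range_mulVecLin_one_sub_mul_eq_ker hMP.1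
  have h_rows : ∀ x, ∀ r ∉ Set.range (Sum.map (Prod.map Fin.succ id) id),
      ((1 - Zdag * ZAB A B T) *ᵥ x) r = 0 := by
    rintro x (⟨t, i⟩ | q) hr
    · obtain rfl : t = 0 := by
        by_contra ht
        exact hr ⟨Sum.inl (t.pred ht, i), by simp⟩
      have h_ker := h_range ▸ LinearMap.mem_range_self _ x
      exact (ZAB_mulVec_apply_zero A B _ i).symm.trans
        (congrFun (LinearMap.mem_ker.mp h_ker) (0, i))
    · exact absurd ⟨Sum.inr q, rfl⟩ hr
  rw [tail2_eq_submatrix, Matrix.rank_submatrix_id_eq_of_mulVec_apply_eq_zero h_rows,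
    Matrix.rank, h_range, finrank_ker_ZAB]
end

section
/- Localized trajectory set characterization (dynamics-first): assume there exists Φ satisfying both Z_{AB}Φ=[I;0] and the locality constraint (vec(Φ₂))_𝔏 = 0, where Φ₂ := Φ_{Nx+1:,:}. Then Y_L(x0) = {Z_p x0 + Z_h X F†g + Z_h X (I - F†F)μ : μ free}, where F := (Z_h^{blk})_{𝔏,:} and g := -(vec(Z_p))_𝔏, and dim(Y_L(x0)) = rank(Z_h X (I - F†F)). -/
open Matrix

/-- Column-wise vectorization: `vec(M) (j, i) = M i j`. -/
def vecc {r c : Type*} (M : Matrix r c ℝ) : c × r → ℝ := fun q => M q.2 q.1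

/-- Block-diagonal augmentation `M^blk := blkdiag(M, …, M)`, one copy of `M` per
element of the column-index type `c`, so that `vec(M Λ) = M^blk vec(Λ)`. -/
def blkaug (c : Type*) [DecidableEq c] {r r' : Type*} (M : Matrix r r' ℝ) :
    Matrix (c × r) (c × r') ℝ :=
  Matrix.of fun q p => if q.1 = p.1 then M q.2 p.2 else 0

/-- Augmented state matrix `X(x0) := [(x0)_1 I, …, (x0)_{Nx} I]` (identity blocks of
size `r`), satisfying `Λ x0 = X(x0) vec(Λ)`. -/
def augX {Nx : ℕ} (r : Type*) [DecidableEq r] (x0 : Fin Nx → ℝ) :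
    Matrix r (Fin Nx × r) ℝ :=
  Matrix.of fun i q => if i = q.2 then x0 q.1 else 0

/-!
With `Z_{AB} Z† Z_{AB} = Z_{AB}` the solutions of `Z_{AB} Φ = [I;0]` are exactly
`Φ = Z† [I;0] + (I - Z† Z_{AB}) Λ` for free `Λ`, so dropping the first block row gives
`Φ₂ = Z_p + Z_h Λ`. Vectorizing, the locality constraint becomes the linear system
`F vec(Λ) = g` and the trajectory becomes `Z_p x0 + Z_h X vec(Λ)`. The system is
consistent by the feasibility hypothesis, so `F†` parametrizes its solutions as
`F†g + (I - F†F) μ`; the trajectory set is then an affine image of the whole space, whose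
direction is the column space of `Z_h X (I - F†F)`.
-/

section InnerInverse

variable {α m n : Type*} [Ring α] [Fintype m] [Fintype n] [DecidableEq n]
  {M : Matrix m n α} {Md : Matrix n m α}

theorem Matrix.eq_add_sub_mul_of_mul_eq {c : Type*} {R : Matrix m c α} {Φ : Matrix n c α}
    (hΦ : M * Φ = R) : Φ = Md * R + (1 - Md * M : Matrix n n α) * Φ := by
  rw [Matrix.sub_mul, Matrix.one_mul, Matrix.mul_assoc, hΦ, add_sub_cancel]

theorem Matrix.exists_mul_eq_and_iff {c : Type*} (hM : M * Md * M = M) {R : Matrix m c α}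
    (hR : ∃ Φ₀ : Matrix n c α, M * Φ₀ = R) (Q : Matrix n c α → Prop) :
    (∃ Φ, M * Φ = R ∧ Q Φ) ↔ ∃ Λ : Matrix n c α, Q (Md * R + (1 - Md * M) * Λ) := by
  obtain ⟨Φ₀, rfl⟩ := hR
  refine ⟨fun ⟨Φ, hΦ, hQ⟩ => ⟨Φ, Matrix.eq_add_sub_mul_of_mul_eq hΦ ▸ hQ⟩,
    fun ⟨Λ, hQ⟩ => ⟨_, ?_, hQ⟩⟩
  simp only [Matrix.mul_add, ← Matrix.mul_assoc, hM, Matrix.mul_sub, Matrix.mul_one,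
    sub_self, Matrix.zero_mul, add_zero]

theorem Matrix.exists_mulVec_eq_and_iff (hM : M * Md * M = M) {r : m → α}
    (hr : ∃ v₀ : n → α, M *ᵥ v₀ = r) (Q : (n → α) → Prop) :
    (∃ v, M *ᵥ v = r ∧ Q v) ↔ ∃ μ, Q (Md *ᵥ r + (1 - Md * M) *ᵥ μ) := by
  obtain ⟨v₀, rfl⟩ := hr
  refine ⟨fun ⟨v, hv, hQ⟩ => ⟨v, ?_⟩, fun ⟨μ, hQ⟩ => ⟨_, ?_, hQ⟩⟩
  · rwa [Matrix.sub_mulVec, Matrix.one_mulVec, ← Matrix.mulVec_mulVec, hv,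
      add_sub_cancel]
  · simp only [Matrix.mulVec_add, Matrix.mulVec_mulVec, ← Matrix.mul_assoc, hM,
      Matrix.mul_sub, Matrix.mul_one, sub_self, Matrix.zero_mulVec, add_zero]

end InnerInverse

section Vectorization

variable {r c d : Type*}

theorem vecc_add (M N : Matrix r c ℝ) : vecc (M + N) = vecc M + vecc N := rfl

theorem vecc_mul [Fintype c] [Fintype d] [DecidableEq d] (M : Matrix r c ℝ)
    (Λ : Matrix c d ℝ) : vecc (M * Λ) = blkaug d M *ᵥ vecc Λ := by
  ext ⟨j, i⟩
  simp [vecc, blkaug, Matrix.mul_apply, Matrix.mulVec, dotProduct, Fintype.sum_prod_type,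
    ite_mul]

theorem exists_vecc_iff (Q : (c × r → ℝ) → Prop) :
    (∃ Λ : Matrix r c ℝ, Q (vecc Λ)) ↔ ∃ v, Q v :=
  ⟨fun ⟨_, hQ⟩ => ⟨_, hQ⟩, fun ⟨v, hQ⟩ => ⟨Matrix.of fun i j => v (j, i), hQ⟩⟩

theorem mulVec_eq_augX_mulVec_vecc [Fintype r] [DecidableEq r] {Nx : ℕ}
    (Λ : Matrix r (Fin Nx) ℝ) (x0 : Fin Nx → ℝ) : Λ *ᵥ x0 = augX r x0 *ᵥ vecc Λ := by
  ext i
  simp [augX, vecc, Matrix.mulVec, dotProduct, Fintype.sum_prod_type, mul_comm]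

theorem add_mul_mulVec_eq [Fintype r] [DecidableEq r] {Nx : ℕ} (Zp : Matrix c (Fin Nx) ℝ)
    (Zh : Matrix c r ℝ) (Λ : Matrix r (Fin Nx) ℝ) (x0 : Fin Nx → ℝ) :
    (Zp + Zh * Λ) *ᵥ x0 = Zp *ᵥ x0 + (Zh * augX r x0) *ᵥ vecc Λ := by
  rw [Matrix.add_mulVec, ← Matrix.mulVec_mulVec, mulVec_eq_augX_mulVec_vecc Λ,
    Matrix.mulVec_mulVec]

theorem forall_mem_vecc_add_mul_eq_zero_iff [Fintype c] [Fintype d] [DecidableEq d]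
    (L : Finset (d × r)) (Zp : Matrix r d ℝ) (Zh : Matrix r c ℝ) (Λ : Matrix c d ℝ) :
    (∀ l ∈ L, vecc (Zp + Zh * Λ) l = 0) ↔
      (Matrix.of fun (l : L) q => blkaug d Zh l.1 q) *ᵥ vecc Λ = fun l => -vecc Zp l.1 := by
  rw [vecc_add, vecc_mul, funext_iff, Subtype.forall]
  refine forall₂_congr fun l _ => ?_
  change vecc Zp l + (blkaug d Zh *ᵥ vecc Λ) l = 0 ↔ (blkaug d Zh *ᵥ vecc Λ) l = -vecc Zp l
  rw [add_comm, add_eq_zero_iff_eq_neg]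

end Vectorization

theorem tail2_add_mul {Nx Nu T : ℕ} {c c' : Type*} [Fintype c]
    (P : Matrix ((Fin (T+1) × Fin Nx) ⊕ (Fin T × Fin Nu)) c' ℝ)
    (Q : Matrix ((Fin (T+1) × Fin Nx) ⊕ (Fin T × Fin Nu)) c ℝ) (Λ : Matrix c c' ℝ) :
    tail2 (P + Q * Λ) = tail2 P + tail2 Q * Λ := by
  ext p j; rcases p with ⟨t, i⟩ | q <;> simp [tail2, Matrix.mul_apply]

theorem finrank_vectorSpan_setOf_add_mulVec {n m : Type*} [Fintype n] [Fintype m]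
    [DecidableEq n] (c : m → ℝ) (M : Matrix m n ℝ) :
    Module.finrank ℝ (vectorSpan ℝ {y : m → ℝ | ∃ μ : n → ℝ, y = c + M *ᵥ μ}) = M.rank := by
  have hvsub : {y : m → ℝ | ∃ μ : n → ℝ, y = c + M *ᵥ μ} -ᵥ
      {y : m → ℝ | ∃ μ : n → ℝ, y = c + M *ᵥ μ} =
      (LinearMap.range M.mulVecLin : Set (m → ℝ)) := by
    ext z
    constructor
    · rintro ⟨a, ⟨μ₁, rfl⟩, b, ⟨μ₂, rfl⟩, rfl⟩
      exact ⟨μ₁ - μ₂, by simp [Matrix.mulVec_sub]⟩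
    · rintro ⟨μ, rfl⟩
      exact ⟨c + M *ᵥ μ, ⟨μ, rfl⟩, c + M *ᵥ 0, ⟨0, rfl⟩, by simp⟩
  rw [vectorSpan, hvsub, Submodule.span_eq, Matrix.rank]

/-- dynamics-first localized trajectory set: if some `Φ` satisfies both
the dynamics constraint `Z_{AB}Φ = [I;0]` and the locality constraint
`(vec(Φ₂))_𝔏 = 0`, then with `F := (Z_h^blk)_{𝔏,:}` and `g := -(vec Z_p)_𝔏`,
`𝒴_L(x0) = {Z_p x0 + Z_h X F†g + Z_h X (I - F†F) μ : μ free}` and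
`dim 𝒴_L(x0) = rank(Z_h X (I - F†F))`. -/
theorem localized_trajSet_dynamics_first {Nx Nu T : ℕ}
    (A : Matrix (Fin Nx) (Fin Nx) ℝ) (B : Matrix (Fin Nx) (Fin Nu) ℝ)
    (Zdag : Matrix ((Fin (T+1) × Fin Nx) ⊕ (Fin T × Fin Nu)) (Fin (T+1) × Fin Nx) ℝ)
    (hMP : IsMoorePenrose (ZAB A B T) Zdag)
    (x0 : Fin Nx → ℝ)
    (𝔏 : Finset (Fin Nx × ((Fin T × Fin Nx) ⊕ (Fin T × Fin Nu))))
    -- Z_p and Z_h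
    (Zp : Matrix ((Fin T × Fin Nx) ⊕ (Fin T × Fin Nu)) (Fin Nx) ℝ)
    (hZp : Zp = tail2 (Zdag * rhsIO Nx T))
    (Zh : Matrix ((Fin T × Fin Nx) ⊕ (Fin T × Fin Nu))
      ((Fin (T+1) × Fin Nx) ⊕ (Fin T × Fin Nu)) ℝ)
    (hZh : Zh = tail2 (1 - Zdag * ZAB A B T))
    -- F := (Z_h^blk)_{𝔏,:} and g := -(vec Z_p)_𝔏
    (F : Matrix ↥𝔏 (Fin Nx × ((Fin (T+1) × Fin Nx) ⊕ (Fin T × Fin Nu))) ℝ)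
    (hF : F = Matrix.of fun l q => blkaug (Fin Nx) Zh l.1 q)
    (g : ↥𝔏 → ℝ) (hg : g = fun l => -(vecc Zp l.1))
    (Fdag : Matrix (Fin Nx × ((Fin (T+1) × Fin Nx) ⊕ (Fin T × Fin Nu))) ↥𝔏 ℝ)
    (hMPF : IsMoorePenrose F Fdag)
    -- feasibility of dynamics together with locality
    (hfeas : ∃ Φ : Matrix ((Fin (T+1) × Fin Nx) ⊕ (Fin T × Fin Nu)) (Fin Nx) ℝ,
      ZAB A B T * Φ = rhsIO Nx T ∧ ∀ l ∈ 𝔏, vecc (tail2 Φ) l = 0) :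
    {y | ∃ Φ : Matrix ((Fin (T+1) × Fin Nx) ⊕ (Fin T × Fin Nu)) (Fin Nx) ℝ,
        ZAB A B T * Φ = rhsIO Nx T ∧ (∀ l ∈ 𝔏, vecc (tail2 Φ) l = 0) ∧
        y = tail2 Φ *ᵥ x0} =
      {y | ∃ μ : Fin Nx × ((Fin (T+1) × Fin Nx) ⊕ (Fin T × Fin Nu)) → ℝ,
        y = Zp *ᵥ x0 + (Zh * augX ((Fin (T+1) × Fin Nx) ⊕ (Fin T × Fin Nu)) x0) *ᵥ (Fdag *ᵥ g)
          + ((Zh * augX ((Fin (T+1) × Fin Nx) ⊕ (Fin T × Fin Nu)) x0) * (1 - Fdag * F)) *ᵥ μ} ∧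
    Module.finrank ℝ (vectorSpan ℝ
        {y | ∃ Φ : Matrix ((Fin (T+1) × Fin Nx) ⊕ (Fin T × Fin Nu)) (Fin Nx) ℝ,
          ZAB A B T * Φ = rhsIO Nx T ∧ (∀ l ∈ 𝔏, vecc (tail2 Φ) l = 0) ∧
          y = tail2 Φ *ᵥ x0}) =
      ((Zh * augX ((Fin (T+1) × Fin Nx) ⊕ (Fin T × Fin Nu)) x0) * (1 - Fdag * F)).rank := by
  obtain ⟨Φ₀, hΦ₀, hloc₀⟩ := hfeas
  subst hF hg
  have hcons : ∃ v₀, (Matrix.of fun (l : 𝔏) q => blkaug (Fin Nx) Zh l.1 q) *ᵥ v₀ =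
      fun l => -vecc Zp l.1 := ⟨vecc Φ₀, by
    rwa [Matrix.eq_add_sub_mul_of_mul_eq (Md := Zdag) hΦ₀, tail2_add_mul, ← hZp, ← hZh,
      forall_mem_vecc_add_mul_eq_zero_iff] at hloc₀⟩
  refine (fun hsets => ⟨hsets, by rw [hsets, finrank_vectorSpan_setOf_add_mulVec]⟩)
    (Set.ext fun y => ?_)
  simp only [Set.mem_ofPred_eq, Matrix.exists_mul_eq_and_iff hMP.1 ⟨Φ₀, hΦ₀⟩, tail2_add_mul,
    ← hZp, ← hZh, forall_mem_vecc_add_mul_eq_zero_iff, add_mul_mulVec_eq]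
  rw [exists_vecc_iff fun v => _ *ᵥ v = _ ∧ y = _ + _ *ᵥ v,
    Matrix.exists_mulVec_eq_and_iff hMPF.1 hcons]
  simp only [Matrix.mulVec_add, Matrix.mulVec_mulVec, add_assoc]
end
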